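/- arXiv:2506.12569 — 3 statements merged into one kernel-verified Lean document; each statement's English description precedes it below -/
import Mathlib

section
/- Theorem 2, Part (A) (validity of FHR moment functions for average effects). Let h : 𝒴^{T+1} × 𝒳^T × 𝒜 → ℝ and φ : 𝒴^{T+1} × 𝒳^T → ℝ be measurable and suppose: (i) ∫ (φ(y^T, x^T) − h(y^T, x^T, a)) ∏_{t=1}^T f_t(y_t | y_{t−1}, x_t, a) dμ(y_1)⋯dμ(y_T) = 0 for all (y_0, x_1,…,x_T, a); and (ii) for each s = 2,…,T, the partial integral ∫ (φ(y^T, x^T) − h(y^T, x^T, a)) ∏_{t=s}^T f_t(y_t | y_{t−1}, x_t, a) dμ(y_s)⋯dμ(y_T) takes the same value for any two choices of (x_s,…,x_T), holding (y_0,…,y_{s−1}, x_1,…,x_{s−1}, a) fixed. Then for every data generating process ω = (g, π, ν) such that both φ(Y^T, X^T) and h(Y^T, X^T, A) are absolutely integrable under the induced joint law, one has E[φ(Y^T, X^T)] = E[h(Y^T, X^T, A)]. -/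
/-!
Along a path of the data generating process, integrate out the periods backwards. By (ii), the
partial integral of `φ - h` from period `t + 1` on does not depend on `x_{t+1}`, so integrating
`X_{t+1}` against the feedback kernel `g_{t+1}` leaves it unchanged; hence the conditional
expectation of `φ - h` given `(y_0, x_1, a)` is the fixed-covariate integral of (i), which is
zero. Absolute integrability makes the conditional expectations of `φ` and `h` finite for almost
every `(y_0, x_1, a)`, and there the one of `φ - h` is their difference, so they agree almost
everywhere and so do their expectations.
-/

open MeasureTheory ProbabilityTheory Function
open scoped ENNReal

noncomputable section

variable {Y X A : Type*} [MeasurableSpace Y] [MeasurableSpace X] [MeasurableSpace A]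

/-- Iterated partial integral `∫ φ(y^T, x^T) ∏_{r=t}^{t+n-1} f_r(y_r | y_{r-1}, x_r, a)
dμ(y_t) ⋯ dμ(y_{t+n-1})`, for a fixed covariate path `x` and heterogeneity `a`. -/
noncomputable def iterInt (μ : Measure Y) (f : ℕ → Y → Y → X → A → ℝ)
    (φ : (ℕ → Y) → (ℕ → X) → ℝ) (a : A) (x : ℕ → X) :
    ℕ → ℕ → (ℕ → Y) → ℝ
  | 0, _, y => φ y x
  | n + 1, t, y =>
      ∫ yt, f t yt (y (t - 1)) (x t) a *
        iterInt μ f φ a x n (t + 1) (Function.update y t yt) ∂μ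

/-- Expected value of `φ(Y^T, X^T)` conditional on heterogeneity `a` and the history up
to period `t`, with `n` outcome periods remaining, under the feedback kernels `g`. -/
noncomputable def pathInt (μ : Measure Y) (f : ℕ → Y → Y → X → A → ℝ)
    (g : ℕ → Kernel ((ℕ → Y) × (ℕ → X) × A) X)
    (φ : (ℕ → Y) → (ℕ → X) → ℝ) (a : A) :
    ℕ → ℕ → (ℕ → Y) → (ℕ → X) → ℝ
  | 0, _, y, x => φ y x
  | 1, t, y, x =>
      ∫ yt, f t yt (y (t - 1)) (x t) a * φ (Function.update y t yt) x ∂μ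
  | n + 2, t, y, x =>
      ∫ yt, f t yt (y (t - 1)) (x t) a *
        ∫ xt, pathInt μ f g φ a (n + 1) (t + 1) (Function.update y t yt)
            (Function.update x (t + 1) xt)
          ∂(g (t + 1) (Function.update y t yt, x, a)) ∂μ

/-- `ℝ≥0∞`-valued analogue of `pathInt`, used to express absolute integrability under
the induced joint law. -/
noncomputable def pathLint (μ : Measure Y) (f : ℕ → Y → Y → X → A → ℝ)
    (g : ℕ → Kernel ((ℕ → Y) × (ℕ → X) × A) X)
    (φ : (ℕ → Y) → (ℕ → X) → ℝ≥0∞) (a : A) :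
    ℕ → ℕ → (ℕ → Y) → (ℕ → X) → ℝ≥0∞
  | 0, _, y, x => φ y x
  | 1, t, y, x =>
      ∫⁻ yt, ENNReal.ofReal (f t yt (y (t - 1)) (x t) a) * φ (Function.update y t yt) x ∂μ
  | n + 2, t, y, x =>
      ∫⁻ yt, ENNReal.ofReal (f t yt (y (t - 1)) (x t) a) *
        ∫⁻ xt, pathLint μ f g φ a (n + 1) (t + 1) (Function.update y t yt)
            (Function.update x (t + 1) xt)
          ∂(g (t + 1) (Function.update y t yt, x, a)) ∂μ

section Lebesgue

variable {α β : Type*} [MeasurableSpace α] [MeasurableSpace β] {μ : Measure α}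

theorem ofReal_abs_mul_le {c r : ℝ} {ℓ : ℝ≥0∞} (hc : 0 ≤ c) (h : ENNReal.ofReal |r| ≤ ℓ) :
    ENNReal.ofReal |c * r| ≤ ENNReal.ofReal c * ℓ := by
  rw [abs_mul, abs_of_nonneg hc, ENNReal.ofReal_mul hc]
  gcongr

theorem mul_eq_mul_sub_mul_of_ofReal_mul_ne_top {c v u₁ u₂ : ℝ} {ℓ₁ ℓ₂ : ℝ≥0∞} (hc : 0 ≤ c)
    (h : ℓ₁ ≠ ⊤ → ℓ₂ ≠ ⊤ → v = u₁ - u₂) (h₁ : ENNReal.ofReal c * ℓ₁ ≠ ⊤)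
    (h₂ : ENNReal.ofReal c * ℓ₂ ≠ ⊤) : c * v = c * u₁ - c * u₂ := by
  rcases hc.eq_or_lt with rfl | hpos
  · simp
  have hc' : ENNReal.ofReal c ≠ 0 := by simpa using hpos
  rw [h (ENNReal.lt_top_of_mul_ne_top_right h₁ hc').ne
    (ENNReal.lt_top_of_mul_ne_top_right h₂ hc').ne, mul_sub]

theorem ofReal_abs_integral_le {u : α → ℝ} {ℓ : α → ℝ≥0∞}
    (h : ∀ a, ENNReal.ofReal |u a| ≤ ℓ a) :
    ENNReal.ofReal |∫ a, u a ∂μ| ≤ ∫⁻ a, ℓ a ∂μ := by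
  rw [← Real.enorm_eq_ofReal_abs]
  refine (enorm_integral_le_lintegral_enorm u).trans (lintegral_mono fun a => ?_)
  rw [Real.enorm_eq_ofReal_abs]
  exact h a

theorem integrable_of_ofReal_abs_le {u : α → ℝ} {ℓ : α → ℝ≥0∞} (hu : AEStronglyMeasurable u μ)
    (h : ∀ a, ENNReal.ofReal |u a| ≤ ℓ a) (hℓ : ∫⁻ a, ℓ a ∂μ ≠ ⊤) : Integrable u μ := by
  refine ⟨hu, (lintegral_mono fun a => ?_).trans_lt hℓ.lt_top⟩
  rw [Real.enorm_eq_ofReal_abs]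
  exact h a

theorem integral_eq_sub_of_ofReal_abs_le {u₁ u₂ v : α → ℝ} {ℓ₁ ℓ₂ : α → ℝ≥0∞}
    (hu₁ : AEStronglyMeasurable u₁ μ) (hu₂ : AEStronglyMeasurable u₂ μ)
    (hℓ₁ : AEMeasurable ℓ₁ μ) (hℓ₂ : AEMeasurable ℓ₂ μ)
    (h₁ : ∀ a, ENNReal.ofReal |u₁ a| ≤ ℓ₁ a) (h₂ : ∀ a, ENNReal.ofReal |u₂ a| ≤ ℓ₂ a)
    (hfin₁ : ∫⁻ a, ℓ₁ a ∂μ ≠ ⊤) (hfin₂ : ∫⁻ a, ℓ₂ a ∂μ ≠ ⊤)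
    (hv : ∀ a, ℓ₁ a ≠ ⊤ → ℓ₂ a ≠ ⊤ → v a = u₁ a - u₂ a) :
    ∫ a, v a ∂μ = ∫ a, u₁ a ∂μ - ∫ a, u₂ a ∂μ := by
  rw [← integral_sub (integrable_of_ofReal_abs_le hu₁ h₁ hfin₁)
    (integrable_of_ofReal_abs_le hu₂ h₂ hfin₂)]
  refine integral_congr_ae ?_
  filter_upwards [ae_lt_top' hℓ₁ hfin₁, ae_lt_top' hℓ₂ hfin₂] with a ha₁ ha₂
  exact hv a ha₁.ne ha₂.ne

theorem ae_ae_ne_top_of_lintegral_lintegral_ne_top {κ : Kernel α β} [IsSFiniteKernel κ]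
    {L : α × β → ℝ≥0∞} (hL : Measurable L) (h : ∫⁻ a, ∫⁻ b, L (a, b) ∂κ a ∂μ ≠ ⊤) :
    ∀ᵐ a ∂μ, ∀ᵐ b ∂κ a, L (a, b) ≠ ⊤ := by
  filter_upwards [ae_lt_top hL.lintegral_kernel_prod_right' h] with a ha
  filter_upwards [ae_lt_top (hL.comp measurable_prodMk_left) ha.ne] with b hb
  exact hb.ne

end Lebesgue

section PathIntegrals

variable {μ : Measure Y} {f : ℕ → Y → Y → X → A → ℝ}
  {g : ℕ → Kernel ((ℕ → Y) × (ℕ → X) × A) X}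

theorem measurable_update_outcome (t : ℕ) :
    Measurable fun q : ((ℕ → Y) × (ℕ → X) × A) × Y =>
      ((Function.update q.1.1 t q.2, q.1.2.1, q.1.2.2) : (ℕ → Y) × (ℕ → X) × A) := by
  fun_prop

theorem measurable_update_outcome_covariate (t : ℕ) :
    Measurable fun q : (((ℕ → Y) × (ℕ → X) × A) × Y) × X =>
      ((Function.update q.1.1.1 t q.1.2, Function.update q.1.1.2.1 (t + 1) q.2, q.1.1.2.2) :
        (ℕ → Y) × (ℕ → X) × A) := by
  fun_prop

theorem measurable_density_comp
    (hf : ∀ t, Measurable fun p : Y × Y × X × A => f t p.1 p.2.1 p.2.2.1 p.2.2.2) (t : ℕ) :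
    Measurable fun q : ((ℕ → Y) × (ℕ → X) × A) × Y =>
      f t q.2 (q.1.1 (t - 1)) (q.1.2.1 t) q.1.2.2 :=
  (hf t).comp (f := fun q : ((ℕ → Y) × (ℕ → X) × A) × Y =>
    (q.2, q.1.1 (t - 1), q.1.2.1 t, q.1.2.2)) (by fun_prop)

theorem stronglyMeasurable_integral_update {κ : Kernel ((ℕ → Y) × (ℕ → X) × A) X}
    [IsSFiniteKernel κ] {F : (ℕ → Y) × (ℕ → X) × A → ℝ} (hF : StronglyMeasurable F) (t : ℕ) :
    StronglyMeasurable fun q : ((ℕ → Y) × (ℕ → X) × A) × Y =>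
      ∫ xt, F (Function.update q.1.1 t q.2, Function.update q.1.2.1 (t + 1) xt, q.1.2.2)
        ∂κ (Function.update q.1.1 t q.2, q.1.2.1, q.1.2.2) :=
  StronglyMeasurable.integral_kernel_prod_right' (κ := κ.comap _ (measurable_update_outcome t))
    (hF.comp_measurable (measurable_update_outcome_covariate t))

theorem measurable_lintegral_update {κ : Kernel ((ℕ → Y) × (ℕ → X) × A) X}
    [IsSFiniteKernel κ] {F : (ℕ → Y) × (ℕ → X) × A → ℝ≥0∞} (hF : Measurable F) (t : ℕ) :
    Measurable fun q : ((ℕ → Y) × (ℕ → X) × A) × Y =>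
      ∫⁻ xt, F (Function.update q.1.1 t q.2, Function.update q.1.2.1 (t + 1) xt, q.1.2.2)
        ∂κ (Function.update q.1.1 t q.2, q.1.2.1, q.1.2.2) :=
  Measurable.lintegral_kernel_prod_right' (κ := κ.comap _ (measurable_update_outcome t))
    (hF.comp (measurable_update_outcome_covariate t))

theorem stronglyMeasurable_pathInt [SFinite μ] [∀ t, IsSFiniteKernel (g t)]
    (hf : ∀ t, Measurable fun p : Y × Y × X × A => f t p.1 p.2.1 p.2.2.1 p.2.2.2)
    {Φ : (ℕ → Y) → (ℕ → X) → A → ℝ}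
    (hΦ : Measurable fun p : (ℕ → Y) × (ℕ → X) × A => Φ p.1 p.2.1 p.2.2) :
    ∀ n t, StronglyMeasurable fun p : (ℕ → Y) × (ℕ → X) × A =>
      pathInt μ f g (fun y x => Φ y x p.2.2) p.2.2 n t p.1 p.2.1
  | 0, _ => hΦ.stronglyMeasurable
  | 1, t => StronglyMeasurable.integral_prod_right'
      ((measurable_density_comp hf t).mul
        (hΦ.comp (measurable_update_outcome t))).stronglyMeasurable
  | n + 2, t => StronglyMeasurable.integral_prod_right'
      ((measurable_density_comp hf t).stronglyMeasurable.mul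
        (stronglyMeasurable_integral_update (stronglyMeasurable_pathInt hf hΦ (n + 1) (t + 1)) t))

theorem measurable_pathLint [SFinite μ] [∀ t, IsSFiniteKernel (g t)]
    (hf : ∀ t, Measurable fun p : Y × Y × X × A => f t p.1 p.2.1 p.2.2.1 p.2.2.2)
    {Φ : (ℕ → Y) → (ℕ → X) → A → ℝ≥0∞}
    (hΦ : Measurable fun p : (ℕ → Y) × (ℕ → X) × A => Φ p.1 p.2.1 p.2.2) :
    ∀ n t, Measurable fun p : (ℕ → Y) × (ℕ → X) × A =>
      pathLint μ f g (fun y x => Φ y x p.2.2) p.2.2 n t p.1 p.2.1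
  | 0, _ => hΦ
  | 1, t => Measurable.lintegral_prod_right'
      ((measurable_density_comp hf t).ennreal_ofReal.mul (hΦ.comp (measurable_update_outcome t)))
  | n + 2, t => Measurable.lintegral_prod_right'
      ((measurable_density_comp hf t).ennreal_ofReal.mul
        (measurable_lintegral_update (measurable_pathLint hf hΦ (n + 1) (t + 1)) t))

theorem ofReal_abs_pathInt_le (hf₀ : ∀ t ylag x a y, 0 ≤ f t y ylag x a)
    (ψ : (ℕ → Y) → (ℕ → X) → ℝ) (a : A) :
    ∀ n t y x, ENNReal.ofReal |pathInt μ f g ψ a n t y x| ≤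
      pathLint μ f g (fun y x => ENNReal.ofReal |ψ y x|) a n t y x
  | 0, _, _, _ => le_rfl
  | 1, _, _, _ => ofReal_abs_integral_le fun _ => ofReal_abs_mul_le (hf₀ ..) le_rfl
  | n + 2, t, _, _ => ofReal_abs_integral_le fun _ => ofReal_abs_mul_le (hf₀ ..)
      (ofReal_abs_integral_le fun _ => ofReal_abs_pathInt_le hf₀ ψ a (n + 1) (t + 1) _ _)

theorem pathInt_sub [SFinite μ] [∀ t, IsSFiniteKernel (g t)]
    (hf : ∀ t, Measurable fun p : Y × Y × X × A => f t p.1 p.2.1 p.2.2.1 p.2.2.2)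
    (hf₀ : ∀ t ylag x a y, 0 ≤ f t y ylag x a) {Φ₁ Φ₂ : (ℕ → Y) → (ℕ → X) → A → ℝ}
    (hΦ₁ : Measurable fun p : (ℕ → Y) × (ℕ → X) × A => Φ₁ p.1 p.2.1 p.2.2)
    (hΦ₂ : Measurable fun p : (ℕ → Y) × (ℕ → X) × A => Φ₂ p.1 p.2.1 p.2.2) (a : A) :
    ∀ n t y x, pathLint μ f g (fun y x => ENNReal.ofReal |Φ₁ y x a|) a n t y x ≠ ⊤ →
      pathLint μ f g (fun y x => ENNReal.ofReal |Φ₂ y x a|) a n t y x ≠ ⊤ →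
      pathInt μ f g (fun y x => Φ₁ y x a - Φ₂ y x a) a n t y x =
        pathInt μ f g (fun y x => Φ₁ y x a) a n t y x -
          pathInt μ f g (fun y x => Φ₂ y x a) a n t y x
  | 0, _, _, _, _, _ => rfl
  | 1, t, y, x, h₁, h₂ => by
    have hdens : Measurable fun yt => f t yt (y (t - 1)) (x t) a :=
      (measurable_density_comp hf t).comp (measurable_prodMk_left (x := (y, x, a)))
    have hupd : Measurable fun yt : Y => (Function.update y t yt, x, a) := by fun_prop
    exact integral_eq_sub_of_ofReal_abs_le
      (hdens.mul (hΦ₁.comp hupd)).aestronglyMeasurable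
      (hdens.mul (hΦ₂.comp hupd)).aestronglyMeasurable
      (hdens.ennreal_ofReal.mul (hΦ₁.comp hupd).abs.ennreal_ofReal).aemeasurable
      (hdens.ennreal_ofReal.mul (hΦ₂.comp hupd).abs.ennreal_ofReal).aemeasurable
      (fun _ => ofReal_abs_mul_le (hf₀ ..) le_rfl) (fun _ => ofReal_abs_mul_le (hf₀ ..) le_rfl)
      h₁ h₂ fun _ _ _ => mul_sub ..
  | n + 2, t, y, x, h₁, h₂ => by
    have hdens : Measurable fun yt => f t yt (y (t - 1)) (x t) a :=
      (measurable_density_comp hf t).comp (measurable_prodMk_left (x := (y, x, a)))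
    have hsec : Measurable fun yt : Y => ((y, x, a), yt) := measurable_prodMk_left
    have hP₁ := stronglyMeasurable_pathInt (μ := μ) (g := g) hf hΦ₁ (n + 1) (t + 1)
    have hP₂ := stronglyMeasurable_pathInt (μ := μ) (g := g) hf hΦ₂ (n + 1) (t + 1)
    have hL₁ := measurable_pathLint (μ := μ) (g := g)
      (Φ := fun y x a => ENNReal.ofReal |Φ₁ y x a|) hf hΦ₁.abs.ennreal_ofReal (n + 1) (t + 1)
    have hL₂ := measurable_pathLint (μ := μ) (g := g)
      (Φ := fun y x a => ENNReal.ofReal |Φ₂ y x a|) hf hΦ₂.abs.ennreal_ofReal (n + 1) (t + 1)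
    have hupd : ∀ yt, Measurable fun xt : X =>
        (Function.update y t yt, Function.update x (t + 1) xt, a) := fun _ => by fun_prop
    refine integral_eq_sub_of_ofReal_abs_le
      (hdens.stronglyMeasurable.mul
        ((stronglyMeasurable_integral_update hP₁ t).comp_measurable hsec)).aestronglyMeasurable
      (hdens.stronglyMeasurable.mul
        ((stronglyMeasurable_integral_update hP₂ t).comp_measurable hsec)).aestronglyMeasurable
      (hdens.ennreal_ofReal.mul ((measurable_lintegral_update hL₁ t).comp hsec)).aemeasurable
      (hdens.ennreal_ofReal.mul ((measurable_lintegral_update hL₂ t).comp hsec)).aemeasurable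
      (fun _ => ofReal_abs_mul_le (hf₀ ..)
        (ofReal_abs_integral_le fun _ => ofReal_abs_pathInt_le hf₀ _ a _ _ _ _))
      (fun _ => ofReal_abs_mul_le (hf₀ ..)
        (ofReal_abs_integral_le fun _ => ofReal_abs_pathInt_le hf₀ _ a _ _ _ _))
      h₁ h₂ fun yt => mul_eq_mul_sub_mul_of_ofReal_mul_ne_top (hf₀ ..) fun hyt₁ hyt₂ =>
        integral_eq_sub_of_ofReal_abs_le
          (hP₁.comp_measurable (hupd yt)).aestronglyMeasurable
          (hP₂.comp_measurable (hupd yt)).aestronglyMeasurable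
          (hL₁.comp (hupd yt)).aemeasurable (hL₂.comp (hupd yt)).aemeasurable
          (fun _ => ofReal_abs_pathInt_le hf₀ _ a _ _ _ _)
          (fun _ => ofReal_abs_pathInt_le hf₀ _ a _ _ _ _) hyt₁ hyt₂
          fun _ hx₁ hx₂ => pathInt_sub hf hf₀ hΦ₁ hΦ₂ a (n + 1) (t + 1) _ _ hx₁ hx₂

theorem pathInt_eq_iterInt [∀ t, IsMarkovKernel (g t)] {T : ℕ}
    {ψ : (ℕ → Y) → (ℕ → X) → ℝ} {a : A}
    (hψ : ∀ s, 2 ≤ s → s ≤ T → ∀ (y : ℕ → Y) (x x' : ℕ → X), (∀ i, i < s → x i = x' i) →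
      iterInt μ f ψ a x (T - s + 1) s y = iterInt μ f ψ a x' (T - s + 1) s y) :
    ∀ n t, 1 ≤ t → n + t = T + 1 → ∀ y x,
      pathInt μ f g ψ a n t y x = iterInt μ f ψ a x n t y
  | 0, _, _, _, _, _ => rfl
  | 1, _, _, _, _, _ => rfl
  | n + 2, t, ht, hnt, y, x => by
    have hconst : ∀ yt xt, pathInt μ f g ψ a (n + 1) (t + 1) (Function.update y t yt)
        (Function.update x (t + 1) xt) =
          iterInt μ f ψ a x (n + 1) (t + 1) (Function.update y t yt) := by
      intro yt xt
      rw [pathInt_eq_iterInt hψ (n + 1) (t + 1) (by omega) (by omega)]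
      have hs := hψ (t + 1) (by omega) (by omega) (Function.update y t yt)
        (Function.update x (t + 1) xt) x fun i hi => Function.update_of_ne (by omega) _ _
      rwa [show T - (t + 1) + 1 = n + 1 by omega] at hs
    simp only [pathInt, iterInt, hconst, integral_const, probReal_univ, one_smul]

end PathIntegrals

theorem theorem2_partA_general
    (μ : Measure Y) [SigmaFinite μ] (T : ℕ)
    (f : ℕ → Y → Y → X → A → ℝ)
    (hf_meas : ∀ t, Measurable fun p : Y × Y × X × A => f t p.1 p.2.1 p.2.2.1 p.2.2.2)
    (hf_nonneg : ∀ t ylag x a y, 0 ≤ f t y ylag x a)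
    (φ : (ℕ → Y) → (ℕ → X) → ℝ)
    (h : (ℕ → Y) → (ℕ → X) → A → ℝ)
    (hφ_meas : Measurable fun p : (ℕ → Y) × (ℕ → X) => φ p.1 p.2)
    (hh_meas : Measurable fun p : (ℕ → Y) × (ℕ → X) × A => h p.1 p.2.1 p.2.2)
    -- average-effect FHR condition (i)
    (hi : ∀ (y : ℕ → Y) (x : ℕ → X) (a : A),
      iterInt μ f (fun y' x' => φ y' x' - h y' x' a) a x T 1 y = 0)
    -- average-effect FHR condition (ii)
    (hii : ∀ s, 2 ≤ s → s ≤ T → ∀ (y : ℕ → Y) (x x' : ℕ → X) (a : A),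
      (∀ i, i < s → x i = x' i) →
      iterInt μ f (fun y' x' => φ y' x' - h y' x' a) a x (T - s + 1) s y =
        iterInt μ f (fun y' x' => φ y' x' - h y' x' a) a x' (T - s + 1) s y)
    -- the data generating process ω = (g, π, ν)
    (ν : Measure (Y × X))
    (π : Kernel (Y × X) A) [IsMarkovKernel π]
    (g : ℕ → Kernel ((ℕ → Y) × (ℕ → X) × A) X) (hg : ∀ t, IsMarkovKernel (g t))
    (y₀ : ℕ → Y) (x₀ : ℕ → X)
    -- absolute integrability of φ under the induced joint law
    (hφint : (∫⁻ p, ∫⁻ a, pathLint μ f g (fun y x => ENNReal.ofReal |φ y x|) a T 1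
        (Function.update y₀ 0 p.1) (Function.update x₀ 1 p.2) ∂(π p) ∂ν) ≠ ⊤)
    -- absolute integrability of h under the induced joint law
    (hhint : (∫⁻ p, ∫⁻ a, pathLint μ f g (fun y x => ENNReal.ofReal |h y x a|) a T 1
        (Function.update y₀ 0 p.1) (Function.update x₀ 1 p.2) ∂(π p) ∂ν) ≠ ⊤) :
    (∫ p, ∫ a, pathInt μ f g φ a T 1
        (Function.update y₀ 0 p.1) (Function.update x₀ 1 p.2) ∂(π p) ∂ν) =
    (∫ p, ∫ a, pathInt μ f g (fun y x => h y x a) a T 1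
        (Function.update y₀ 0 p.1) (Function.update x₀ 1 p.2) ∂(π p) ∂ν) := by
  have hstart : Measurable fun q : (Y × X) × A =>
      (Function.update y₀ 0 q.1.1, Function.update x₀ 1 q.1.2, q.2) := by fun_prop
  have hφ_lift : Measurable fun p : (ℕ → Y) × (ℕ → X) × A => φ p.1 p.2.1 :=
    hφ_meas.comp (f := fun p : (ℕ → Y) × (ℕ → X) × A => (p.1, p.2.1)) (by fun_prop)
  have hφ_fin := ae_ae_ne_top_of_lintegral_lintegral_ne_top
    ((measurable_pathLint (Φ := fun y x _ => ENNReal.ofReal |φ y x|) hf_meas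
      hφ_lift.abs.ennreal_ofReal T 1).comp hstart) hφint
  have hh_fin := ae_ae_ne_top_of_lintegral_lintegral_ne_top
    ((measurable_pathLint (Φ := fun y x a => ENNReal.ofReal |h y x a|) hf_meas
      hh_meas.abs.ennreal_ofReal T 1).comp hstart) hhint
  refine integral_congr_ae ?_
  filter_upwards [hφ_fin, hh_fin] with p hφ_p hh_p
  refine integral_congr_ae ?_
  filter_upwards [hφ_p, hh_p] with a hφ_a hh_a
  rw [← sub_eq_zero, ← pathInt_sub (Φ₁ := fun y x _ => φ y x) hf_meas hf_nonneg hφ_lift hh_meas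
    a T 1 _ _ hφ_a hh_a,
    pathInt_eq_iterInt (fun s hs hsT y x x' => hii s hs hsT y x x' a) T 1 le_rfl rfl]
  exact hi _ _ a

/-- **Theorem 2, Part (A)**: if the pair `(φ, h)` satisfies the average-effect FHR
conditions (i) and (ii) — i.e. `φ − h` integrates to zero against `∏_{t=1}^T f_t` for
all `(y_0, x^T, a)`, and its partial integrals against `∏_{t=s}^T f_t` do not depend on
`(x_s, …, x_T)` — then for every data generating process `ω = (g, π, ν)` under which
both `φ(Y^T, X^T)` and `h(Y^T, X^T, A)` are absolutely integrable,
`E[φ(Y^T, X^T)] = E[h(Y^T, X^T, A)]`. -/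
theorem theorem2_partA
    (μ : Measure Y) [SigmaFinite μ] (T : ℕ) (hT : 2 ≤ T)
    (f : ℕ → Y → Y → X → A → ℝ)
    (hf_meas : ∀ t, Measurable fun p : Y × Y × X × A => f t p.1 p.2.1 p.2.2.1 p.2.2.2)
    (hf_nonneg : ∀ t ylag x a y, 0 ≤ f t y ylag x a)
    (hf_one : ∀ t (ylag : Y) (x : X) (a : A), ∫⁻ y, ENNReal.ofReal (f t y ylag x a) ∂μ = 1)
    (φ : (ℕ → Y) → (ℕ → X) → ℝ)
    (h : (ℕ → Y) → (ℕ → X) → A → ℝ)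
    (hφ_meas : Measurable fun p : (ℕ → Y) × (ℕ → X) => φ p.1 p.2)
    (hh_meas : Measurable fun p : (ℕ → Y) × (ℕ → X) × A => h p.1 p.2.1 p.2.2)
    -- average-effect FHR condition (i)
    (hi : ∀ (y : ℕ → Y) (x : ℕ → X) (a : A),
      iterInt μ f (fun y' x' => φ y' x' - h y' x' a) a x T 1 y = 0)
    -- average-effect FHR condition (ii)
    (hii : ∀ s, 2 ≤ s → s ≤ T → ∀ (y : ℕ → Y) (x x' : ℕ → X) (a : A),
      (∀ i, i < s → x i = x' i) →
      iterInt μ f (fun y' x' => φ y' x' - h y' x' a) a x (T - s + 1) s y =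
        iterInt μ f (fun y' x' => φ y' x' - h y' x' a) a x' (T - s + 1) s y)
    -- the data generating process ω = (g, π, ν)
    (ν : Measure (Y × X)) [IsProbabilityMeasure ν]
    (π : Kernel (Y × X) A) [IsMarkovKernel π]
    (g : ℕ → Kernel ((ℕ → Y) × (ℕ → X) × A) X) (hg : ∀ t, IsMarkovKernel (g t))
    (y₀ : ℕ → Y) (x₀ : ℕ → X)
    -- absolute integrability of φ under the induced joint law
    (hφint : (∫⁻ p, ∫⁻ a, pathLint μ f g (fun y x => ENNReal.ofReal |φ y x|) a T 1
        (Function.update y₀ 0 p.1) (Function.update x₀ 1 p.2) ∂(π p) ∂ν) ≠ ⊤)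
    -- absolute integrability of h under the induced joint law
    (hhint : (∫⁻ p, ∫⁻ a, pathLint μ f g (fun y x => ENNReal.ofReal |h y x a|) a T 1
        (Function.update y₀ 0 p.1) (Function.update x₀ 1 p.2) ∂(π p) ∂ν) ≠ ⊤) :
    (∫ p, ∫ a, pathInt μ f g φ a T 1
        (Function.update y₀ 0 p.1) (Function.update x₀ 1 p.2) ∂(π p) ∂ν) =
    (∫ p, ∫ a, pathInt μ f g (fun y x => h y x a) a T 1
        (Function.update y₀ 0 p.1) (Function.update x₀ 1 p.2) ∂(π p) ∂ν) :=
  theorem2_partA_general μ T f hf_meas hf_nonneg φ h hφ_meas hh_meas hi hii ν π g hg y₀ x₀ hφint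
    hhint

end
end

section
/- FHR moment function for the average structural hazard (ASH) in the MPH model. Consider the MPH model with T ≥ 2 periods and fix a target evaluation point (ỹ, ỹ₋, x̃) ∈ (0,∞) × (0,∞) × ℝ^k. Let c = λ_α(ỹ) e^{x̃'β + γ ỹ₋}, define h(y^T, x^T, a) = c·e^a and φ(y^T, x^T) = c·(T−1)/p̄, where p̄ = Σ_{t=1}^T ρ_θ(y_t, y_{t−1}, x_t). Then: (i) ∫ (φ(y^T, x^T) − h(y^T, x^T, a)) ∏_{t=1}^T f_θ(y_t | y_{t−1}, x_t, a) dy_1⋯dy_T = 0 for all (y_0, x_1,…,x_T, a); and (ii) for each s = 2,…,T, the partial integral ∫ (φ − h) ∏_{t=s}^T f_θ(y_t | y_{t−1}, x_t, a) dy_s⋯dy_T does not depend on (x_s,…,x_T). Consequently, under every feedback process and heterogeneity distribution making φ and h integrable, E[φ(Y^T, X^T)] equals the average structural hazard λ_α(ỹ) e^{x̃'β + γ ỹ₋} E[e^A]. -/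
/-!
The substitution `ρ = Λ(y) e^{γ y₋ + x'β}` turns each period's density `f_θ(· | y₋, x, a)` into
the exponential density with rate `b = e^a`, whatever `(y₋, x)` are. Integrating the periods out
from the last one backwards, a function `G(p̄)` therefore becomes `s ↦ E[G(s + E₁ + ⋯ + Eₙ)]`,
with `Eᵢ` i.i.d. `Exp(b)`, evaluated at the part `s` of `p̄` already realized: the partial
integrals see the covariates only through `s`, and the feedback kernels integrate out a constant.
For `G(p̄) = m/p̄ - d` this is `m E[1/(s + Γ)] - d` with `Γ ~ Gamma(n, b)`, and
`E[1/Γ] = b/(n-1)` for `n ≥ 2`; with `m = c(T-1)` the full integral is `c b - d`, which vanishes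
for `d = c e^a` and equals `c e^a` for `d = 0`.
-/

open MeasureTheory ProbabilityTheory Function Real Set
open scoped ENNReal

noncomputable section

section MPH

variable {k : ℕ}

/-- Integrated baseline hazard `Λ(y) = ∫₀^y λ(u) du`. -/
noncomputable def intHaz (lam : ℝ → ℝ) (y : ℝ) : ℝ := ∫ u in Set.Ioc (0:ℝ) y, lam u

/-- `ρ_θ(y, y₋, x) = Λ_α(y) e^{γ y₋ + x'β}` in the MPH model. -/
noncomputable def mphRho (lam : ℝ → ℝ) (γ : ℝ) (β : Fin k → ℝ)
    (y ylag : ℝ) (x : Fin k → ℝ) : ℝ :=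
  intHaz lam y * Real.exp (γ * ylag + ∑ i, x i * β i)

noncomputable def mphDensity (lam : ℝ → ℝ) (γ : ℝ) (β : Fin k → ℝ)
    (y ylag : ℝ) (x : Fin k → ℝ) (a : ℝ) : ℝ :=
  lam y * Real.exp (γ * ylag + ∑ i, x i * β i + a) *
    Real.exp (-(intHaz lam y * Real.exp (γ * ylag + ∑ i, x i * β i + a)))

/-- `p̄ = Σ_{t=1}^T ρ_θ(y_t, y_{t−1}, x_t)` along a trajectory. -/
noncomputable def mphPbar (lam : ℝ → ℝ) (γ : ℝ) (β : Fin k → ℝ) (T : ℕ)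
    (y : ℕ → ℝ) (x : ℕ → Fin k → ℝ) : ℝ :=
  ∑ t ∈ Finset.Icc 1 T, mphRho lam γ β (y t) (y (t - 1)) (x t)

section IntegratedHazard

variable {lam : ℝ → ℝ}

theorem intHaz_of_nonpos (lam : ℝ → ℝ) {y : ℝ} (hy : y ≤ 0) : intHaz lam y = 0 := by
  simp [intHaz, Ioc_eq_empty_of_le hy]

theorem intHaz_eq_intervalIntegral (lam : ℝ → ℝ) {y : ℝ} (hy : 0 ≤ y) :
    intHaz lam y = ∫ u in (0)..y, lam u :=
  (intervalIntegral.integral_of_le hy).symm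

theorem intervalIntegrable_of_integrableOn_Ioc
    (hint : ∀ y : ℝ, 0 < y → IntegrableOn lam (Ioc 0 y) volume) {p q : ℝ} (hp : 0 ≤ p)
    (hq : 0 ≤ q) : IntervalIntegrable lam volume p q := by
  have from_zero : ∀ y, 0 ≤ y → IntervalIntegrable lam volume 0 y := fun y hy => by
    rcases hy.eq_or_lt with rfl | hy
    · exact IntervalIntegrable.refl
    · exact (intervalIntegrable_iff_integrableOn_Ioc_of_le hy.le).2 (hint y hy)
  exact (from_zero p hp).symm.trans (from_zero q hq)

theorem intHaz_sub_intHaz (hint : ∀ y : ℝ, 0 < y → IntegrableOn lam (Ioc 0 y) volume)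
    {p q : ℝ} (hp : 0 ≤ p) (hq : 0 ≤ q) :
    intHaz lam q - intHaz lam p = ∫ u in p..q, lam u := by
  rw [intHaz_eq_intervalIntegral lam hp, intHaz_eq_intervalIntegral lam hq,
    intervalIntegral.integral_interval_sub_left
      (intervalIntegrable_of_integrableOn_Ioc hint le_rfl hq)
      (intervalIntegrable_of_integrableOn_Ioc hint le_rfl hp)]

theorem intHaz_nonneg (hpos : ∀ y ∈ Ioi (0:ℝ), 0 < lam y) (y : ℝ) : 0 ≤ intHaz lam y :=
  setIntegral_nonneg measurableSet_Ioc fun u hu => (hpos u hu.1).le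

theorem strictMonoOn_intHaz (hpos : ∀ y ∈ Ioi (0:ℝ), 0 < lam y)
    (hint : ∀ y : ℝ, 0 < y → IntegrableOn lam (Ioc 0 y) volume) :
    StrictMonoOn (intHaz lam) (Ici 0) := by
  intro p hp q hq hpq
  rw [← sub_pos, intHaz_sub_intHaz hint hp hq]
  exact intervalIntegral.intervalIntegral_pos_of_pos_on
    (intervalIntegrable_of_integrableOn_Ioc hint hp hq)
    (fun u hu => hpos u (lt_of_le_of_lt hp hu.1)) hpq

theorem intHaz_pos (hpos : ∀ y ∈ Ioi (0:ℝ), 0 < lam y)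
    (hint : ∀ y : ℝ, 0 < y → IntegrableOn lam (Ioc 0 y) volume) {y : ℝ} (hy : 0 < y) :
    0 < intHaz lam y := by
  simpa [intHaz_of_nonpos lam le_rfl] using
    strictMonoOn_intHaz hpos hint self_mem_Ici hy.le hy

theorem monotone_intHaz (hpos : ∀ y ∈ Ioi (0:ℝ), 0 < lam y)
    (hint : ∀ y : ℝ, 0 < y → IntegrableOn lam (Ioc 0 y) volume) :
    Monotone (intHaz lam) := by
  intro u v huv
  rcases le_or_gt u 0 with hu | hu
  · exact (intHaz_of_nonpos lam hu).trans_le (intHaz_nonneg hpos v)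
  · exact (strictMonoOn_intHaz hpos hint).monotoneOn hu.le (hu.le.trans huv) huv

theorem exists_intHaz_eq (hint : ∀ y : ℝ, 0 < y → IntegrableOn lam (Ioc 0 y) volume)
    (htop : Filter.Tendsto (intHaz lam) Filter.atTop Filter.atTop) {u : ℝ} (hu : 0 ≤ u) :
    ∃ p, 0 ≤ p ∧ intHaz lam p = u := by
  obtain ⟨Y, hYu, hY⟩ :=
    ((htop.eventually_ge_atTop u).and (Filter.eventually_ge_atTop 0)).exists
  have hcont : ContinuousOn (intHaz lam) (Icc 0 Y) := by
    have h := intervalIntegral.continuousOn_primitive_interval (f := lam) (μ := volume)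
      (a := 0) (b := Y) (by
        rw [uIcc_of_le hY, integrableOn_Icc_iff_integrableOn_Ioc]
        exact (intervalIntegrable_of_integrableOn_Ioc hint le_rfl hY).1)
    rw [uIcc_of_le hY] at h
    exact h.congr fun y hy => intHaz_eq_intervalIntegral lam hy.1
  obtain ⟨p, hp, hpu⟩ := intermediate_value_Icc hY hcont
    ⟨(intHaz_of_nonpos lam le_rfl).trans_le hu, hYu⟩
  exact ⟨p, hp.1, hpu⟩

theorem map_intHaz_withDensity (hpos : ∀ y ∈ Ioi (0:ℝ), 0 < lam y)
    (hint : ∀ y : ℝ, 0 < y → IntegrableOn lam (Ioc 0 y) volume)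
    (htop : Filter.Tendsto (intHaz lam) Filter.atTop Filter.atTop) :
    ((volume.restrict (Ioi (0:ℝ))).withDensity fun y => ENNReal.ofReal (lam y)).map
      (intHaz lam) = volume.restrict (Ioi 0) := by
  have hΛ : Measurable (intHaz lam) := (monotone_intHaz hpos hint).measurable
  have hmono := strictMonoOn_intHaz hpos hint
  refine (Measure.ext_of_Ioc' _ _ (fun u v _ => ?_) (fun u v huv => ?_)).symm
  · rw [Measure.restrict_apply measurableSet_Ioc]
    exact ((measure_mono inter_subset_left).trans_lt measure_Ioc_lt_top).ne
  -- `Λ` is an increasing bijection of `[0, ∞)` onto itself, so on `(0, ∞)` it pulls `Ioc u v`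
  -- back to `Ioc p q` with `Λ p = max u 0` and `Λ q = max v 0`.
  obtain ⟨p, hp, hpu⟩ := exists_intHaz_eq hint htop (le_max_right u 0)
  obtain ⟨q, hq, hqv⟩ := exists_intHaz_eq hint htop (le_max_right v 0)
  have hpq : p ≤ q := by
    rw [← hmono.le_iff_le hp hq, hpu, hqv]
    exact max_le_max_right 0 huv.le
  have hiff : ∀ y, 0 < y → (u < intHaz lam y ↔ p < y) ∧ (intHaz lam y ≤ v ↔ y ≤ q) := by
    intro y hy
    have h0 := intHaz_pos hpos hint hy
    rw [← hmono.lt_iff_lt hp hy.le, ← hmono.le_iff_le hy.le hq, hpu, hqv, max_lt_iff, le_max_iff]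
    exact ⟨⟨fun h => ⟨h, h0⟩, And.left⟩, ⟨Or.inl, fun h => h.resolve_right h0.not_ge⟩⟩
  have hpre : intHaz lam ⁻¹' Ioc u v ∩ Ioi 0 = Ioc p q := by
    ext y
    constructor
    · rintro ⟨⟨huy, hyv⟩, hy⟩
      exact ⟨(hiff y hy).1.1 huy, (hiff y hy).2.1 hyv⟩
    · rintro ⟨hpy, hyq⟩
      have hy : 0 < y := hp.trans_lt hpy
      exact ⟨⟨(hiff y hy).1.2 hpy, (hiff y hy).2.2 hyq⟩, hy⟩
  have hIoc : Ioc u v ∩ Ioi 0 = Ioc (max u 0) (max v 0) := by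
    ext z
    simp only [mem_inter_iff, mem_Ioc, mem_Ioi, max_lt_iff, le_max_iff]
    constructor
    · rintro ⟨⟨h1, h2⟩, h3⟩
      exact ⟨⟨h1, h3⟩, Or.inl h2⟩
    · rintro ⟨⟨h1, h3⟩, h2 | h2⟩
      exacts [⟨⟨h1, h2⟩, h3⟩, absurd h3 h2.not_gt]
  have hint_pq : IntegrableOn lam (Ioc p q) :=
    (intervalIntegrable_iff_integrableOn_Ioc_of_le hpq).1
      (intervalIntegrable_of_integrableOn_Ioc hint hp hq)
  have hnonneg : 0 ≤ᵐ[volume.restrict (Ioc p q)] lam :=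
    ae_restrict_of_forall_mem measurableSet_Ioc fun y hy => (hpos y (hp.trans_lt hy.1)).le
  rw [Measure.map_apply hΛ measurableSet_Ioc, withDensity_apply _ (hΛ measurableSet_Ioc),
    Measure.restrict_restrict (hΛ measurableSet_Ioc), hpre,
    Measure.restrict_apply measurableSet_Ioc, hIoc, Real.volume_Ioc,
    ← ofReal_integral_eq_lintegral_ofReal hint_pq hnonneg, ← intervalIntegral.integral_of_le hpq,
    ← intHaz_sub_intHaz hint hp hq, hpu, hqv]

theorem setIntegral_mul_comp_intHaz (hpos : ∀ y ∈ Ioi (0:ℝ), 0 < lam y)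
    (hint : ∀ y : ℝ, 0 < y → IntegrableOn lam (Ioc 0 y) volume)
    (htop : Filter.Tendsto (intHaz lam) Filter.atTop Filter.atTop)
    (hmeas : Measurable lam) {F : ℝ → ℝ} (hF : Measurable F) :
    ∫ y in Ioi (0:ℝ), lam y * F (intHaz lam y) = ∫ u in Ioi (0:ℝ), F u := by
  set ν := (volume.restrict (Ioi (0:ℝ))).withDensity fun y => ENNReal.ofReal (lam y)
  calc ∫ y in Ioi (0:ℝ), lam y * F (intHaz lam y)
      = ∫ y, F (intHaz lam y) ∂ν := by
        rw [integral_withDensity_eq_integral_toReal_smul hmeas.ennreal_ofReal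
          (Filter.Eventually.of_forall fun _ => ENNReal.ofReal_lt_top)]
        refine setIntegral_congr_fun measurableSet_Ioi fun y hy => ?_
        rw [ENNReal.toReal_ofReal (hpos y hy).le, smul_eq_mul]
    _ = ∫ u, F u ∂(ν.map (intHaz lam)) :=
        (integral_map (monotone_intHaz hpos hint).measurable.aemeasurable
          hF.aestronglyMeasurable).symm
    _ = ∫ u in Ioi (0:ℝ), F u := by rw [map_intHaz_withDensity hpos hint htop]

end IntegratedHazard

section ExponentialSmoothing

def expConv (b : ℝ) (G : ℝ → ℝ) (s : ℝ) : ℝ :=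
  ∫ ρ in Ioi (0:ℝ), b * exp (-(b * ρ)) * G (s + ρ)

theorem measurable_expConv (b : ℝ) {G : ℝ → ℝ} (hG : Measurable G) :
    Measurable (expConv b G) := by
  have hF : Measurable fun q : ℝ × ℝ => b * exp (-(b * q.2)) * G (q.1 + q.2) := by fun_prop
  exact hF.stronglyMeasurable.integral_prod_right'.measurable

theorem measurable_iterate_expConv (b : ℝ) {G : ℝ → ℝ} (hG : Measurable G) (n : ℕ) :
    Measurable ((expConv b)^[n] G) := by
  induction n with
  | zero => exact hG
  | succ n ih => rw [iterate_succ_apply']; exact measurable_expConv b ih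

theorem integrableOn_exp_neg_mul {r : ℝ} (hr : 0 < r) :
    IntegrableOn (fun ρ => exp (-(r * ρ))) (Ioi 0) := by
  simpa only [neg_mul] using exp_neg_integrableOn_Ioi 0 hr

theorem lintegral_exp_neg_mul_Ioi {r : ℝ} (hr : 0 < r) :
    ∫⁻ ρ in Ioi (0:ℝ), ENNReal.ofReal (exp (-(r * ρ))) = ENNReal.ofReal r⁻¹ := by
  rw [← ofReal_integral_eq_lintegral_ofReal (integrableOn_exp_neg_mul hr)
    (Filter.Eventually.of_forall fun _ => (exp_pos _).le)]
  simpa [neg_mul] using congrArg ENNReal.ofReal (integral_exp_mul_Ioi (neg_lt_zero.2 hr) 0)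

theorem setIntegral_mul_exp_neg_mul {b : ℝ} (hb : 0 < b) :
    ∫ ρ in Ioi (0:ℝ), b * exp (-(b * ρ)) = 1 := by
  rw [integral_const_mul]
  simpa [neg_mul, hb.ne'] using congrArg (b * ·) (integral_exp_mul_Ioi (neg_lt_zero.2 hb) 0)

/-- `E[1/(s + Γ)]` for `Γ ~ Gamma(n, b)`, through `1/x = ∫₀^∞ e^{-xv} dv` and the Laplace
transform `E[e^{-vΓ}] = (b/(b+v))^n`. -/
def invGammaMoment (b : ℝ) (n : ℕ) (s : ℝ) : ℝ≥0∞ :=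
  ∫⁻ v in Ioi (0:ℝ), ENNReal.ofReal (exp (-(s * v)) * (b / (b + v)) ^ n)

theorem measurable_invGammaMoment (b : ℝ) (n : ℕ) : Measurable (invGammaMoment b n) :=
  Measurable.lintegral_prod_right' (f := fun q : ℝ × ℝ =>
    ENNReal.ofReal (exp (-(q.1 * q.2)) * (b / (b + q.2)) ^ n)) (by fun_prop)

theorem invGammaMoment_zero_zero (b : ℝ) : invGammaMoment b 0 0 = ⊤ := by
  simp [invGammaMoment]

theorem invGammaMoment_zero {s : ℝ} (b : ℝ) (hs : 0 < s) :
    invGammaMoment b 0 s = ENNReal.ofReal s⁻¹ := by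
  simpa [invGammaMoment] using lintegral_exp_neg_mul_Ioi hs

theorem invGammaMoment_le_invGammaMoment_zero {b : ℝ} (hb : 0 ≤ b) (n : ℕ) (s : ℝ) :
    invGammaMoment b n s ≤ invGammaMoment b 0 s := by
  refine setLIntegral_mono' measurableSet_Ioi fun v hv => ENNReal.ofReal_le_ofReal ?_
  have hbv : 0 ≤ b + v := by linarith [mem_Ioi.1 hv]
  rw [pow_zero, mul_one]
  exact mul_le_of_le_one_right (exp_pos _).le
    (pow_le_one₀ (div_nonneg hb hbv) (div_le_one_of_le₀ (by linarith [mem_Ioi.1 hv]) hbv))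

theorem invGammaMoment_lt_top {b s : ℝ} (hb : 0 ≤ b) (hs : 0 < s) (n : ℕ) :
    invGammaMoment b n s < ⊤ :=
  (invGammaMoment_le_invGammaMoment_zero hb n s).trans_lt (by simp [invGammaMoment_zero b hs])

theorem lintegral_mul_invGammaMoment_add {b : ℝ} (hb : 0 < b) (n : ℕ) (s : ℝ) :
    ∫⁻ ρ in Ioi (0:ℝ), ENNReal.ofReal (b * exp (-(b * ρ))) * invGammaMoment b n (s + ρ)
      = invGammaMoment b (n + 1) s := by
  have inner : ∀ v ∈ Ioi (0:ℝ), ∫⁻ ρ in Ioi (0:ℝ), ENNReal.ofReal (b * exp (-(b * ρ))) *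
        ENNReal.ofReal (exp (-((s + ρ) * v)) * (b / (b + v)) ^ n)
      = ENNReal.ofReal (exp (-(s * v)) * (b / (b + v)) ^ (n + 1)) := by
    intro v hv
    have hbv : 0 < b + v := by linarith [mem_Ioi.1 hv]
    have hC : 0 ≤ exp (-(s * v)) * (b / (b + v)) ^ n * b := by positivity
    calc _ = ∫⁻ ρ in Ioi (0:ℝ), ENNReal.ofReal (exp (-(s * v)) * (b / (b + v)) ^ n * b) *
          ENNReal.ofReal (exp (-((b + v) * ρ))) := by
          refine lintegral_congr fun ρ => ?_
          rw [← ENNReal.ofReal_mul (by positivity), ← ENNReal.ofReal_mul hC,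
            show -((s + ρ) * v) = -(s * v) + -(v * ρ) by ring,
            show -((b + v) * ρ) = -(b * ρ) + -(v * ρ) by ring, exp_add, exp_add]
          ring_nf
      _ = _ := by
          rw [lintegral_const_mul' _ _ ENNReal.ofReal_ne_top, lintegral_exp_neg_mul_Ioi hbv,
            ← ENNReal.ofReal_mul hC]
          congr 1
          rw [pow_succ, div_eq_mul_inv b]
          ring
  unfold invGammaMoment
  simp_rw [← lintegral_const_mul' _ _ ENNReal.ofReal_ne_top]
  rw [lintegral_lintegral_swap (by fun_prop)]
  exact setLIntegral_congr_fun measurableSet_Ioi inner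

theorem invGammaMoment_add_two_zero {b : ℝ} (hb : 0 < b) (m : ℕ) :
    invGammaMoment b (m + 2) 0 = ENNReal.ofReal (b / (m + 1)) := by
  set g : ℝ → ℝ := fun v => -(b / (m + 1)) * (b / (b + v)) ^ (m + 1)
  have hderiv : ∀ v ∈ Ici (0:ℝ), HasDerivAt g ((b / (b + v)) ^ (m + 2)) v := by
    intro v hv
    have hbv : b + v ≠ 0 := by linarith [mem_Ici.1 hv]
    have hq : HasDerivAt (fun v => b / (b + v)) (-(b / (b + v)) ^ 2 / b) v :=
      ((hasDerivAt_const v b).fun_div ((hasDerivAt_id' v).const_add b) hbv).congr_deriv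
        (by field_simp; ring)
    refine ((hq.fun_pow (m + 1)).const_mul (-(b / (m + 1)))).congr_deriv ?_
    simp only [Nat.add_sub_cancel]
    generalize b / (b + v) = q
    push_cast
    field_simp
    ring
  have hlim : Filter.Tendsto g Filter.atTop (nhds 0) := by
    have hq : Filter.Tendsto (fun v : ℝ => b / (b + v)) Filter.atTop (nhds 0) :=
      tendsto_const_nhds.div_atTop (Filter.tendsto_atTop_add_const_left _ b Filter.tendsto_id)
    have := (hq.pow (m + 1)).const_mul (-(b / (m + 1)))
    rwa [zero_pow (Nat.succ_ne_zero m), mul_zero] at this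
  have hnn : ∀ v ∈ Ioi (0:ℝ), 0 ≤ (b / (b + v)) ^ (m + 2) := fun v hv =>
    pow_nonneg (div_nonneg hb.le (by linarith [mem_Ioi.1 hv])) _
  simp only [invGammaMoment, zero_mul, neg_zero, exp_zero, one_mul]
  rw [← ofReal_integral_eq_lintegral_ofReal (integrableOn_Ioi_deriv_of_nonneg' hderiv hnn hlim)
    (ae_restrict_of_forall_mem measurableSet_Ioi hnn),
    integral_Ioi_of_hasDerivAt_of_nonneg' hderiv hnn hlim]
  simp [g, hb.ne']

theorem iterate_expConv_div_sub {b : ℝ} (hb : 0 < b) (m d : ℝ) (n : ℕ) {s : ℝ} (hs : 0 ≤ s)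
    (hfin : invGammaMoment b n s ≠ ⊤) :
    (expConv b)^[n] (fun u => m / u - d) s = m * (invGammaMoment b n s).toReal - d := by
  induction n generalizing s with
  | zero =>
    obtain rfl | hs := hs.eq_or_lt
    · exact absurd (invGammaMoment_zero_zero b) hfin
    · rw [iterate_zero_apply, invGammaMoment_zero b hs, ENNReal.toReal_ofReal (inv_nonneg.2 hs.le),
        div_eq_mul_inv]
  | succ n ih =>
    set J : ℝ → ℝ≥0∞ := fun ρ =>
      ENNReal.ofReal (b * exp (-(b * ρ))) * invGammaMoment b n (s + ρ)
    have hJmeas : Measurable J :=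
      Measurable.mul (by fun_prop) ((measurable_invGammaMoment b n).comp (measurable_const_add s))
    have hJ : ∀ ρ, b * exp (-(b * ρ)) * (invGammaMoment b n (s + ρ)).toReal = (J ρ).toReal :=
      fun ρ => by rw [ENNReal.toReal_mul, ENNReal.toReal_ofReal (by positivity)]
    have hJint : ∫⁻ ρ in Ioi (0:ℝ), J ρ = invGammaMoment b (n + 1) s :=
      lintegral_mul_invGammaMoment_add hb n s
    rw [← hJint] at hfin
    rw [iterate_succ_apply', expConv]
    calc ∫ ρ in Ioi (0:ℝ), b * exp (-(b * ρ)) * (expConv b)^[n] (fun u => m / u - d) (s + ρ)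
        = ∫ ρ in Ioi (0:ℝ), (m * (J ρ).toReal - d * (b * exp (-(b * ρ)))) := by
          refine setIntegral_congr_fun measurableSet_Ioi fun ρ hρ => ?_
          have hsρ : 0 < s + ρ := by linarith [mem_Ioi.1 hρ]
          rw [ih hsρ.le (invGammaMoment_lt_top hb.le hsρ n).ne, ← hJ]
          ring
      _ = m * (∫ ρ in Ioi (0:ℝ), (J ρ).toReal) - d * ∫ ρ in Ioi (0:ℝ), b * exp (-(b * ρ)) := by
          rw [integral_sub
            ((integrable_toReal_of_lintegral_ne_top hJmeas.aemeasurable hfin).const_mul m)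
            (((integrableOn_exp_neg_mul hb).const_mul b).const_mul d), integral_const_mul,
            integral_const_mul]
      _ = m * (invGammaMoment b (n + 1) s).toReal - d := by
          rw [integral_toReal hJmeas.aemeasurable (ae_lt_top hJmeas hfin), hJint,
            setIntegral_mul_exp_neg_mul hb, mul_one]

theorem iterate_expConv_div_sub_zero {b : ℝ} (hb : 0 < b) (m d : ℝ) {T : ℕ} (hT : 2 ≤ T) :
    (expConv b)^[T] (fun u => m / u - d) 0 = m * b / (T - 1) - d := by
  obtain ⟨j, rfl⟩ : ∃ j, T = j + 2 := ⟨T - 2, by omega⟩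
  rw [iterate_expConv_div_sub hb m d _ le_rfl
      (by rw [invGammaMoment_add_two_zero hb]; exact ENNReal.ofReal_ne_top),
    invGammaMoment_add_two_zero hb, ENNReal.toReal_ofReal (by positivity)]
  push_cast
  ring

end ExponentialSmoothing

section Trajectory

variable {lam : ℝ → ℝ} (γ : ℝ) (β : Fin k → ℝ)

theorem mphPbar_zero (y : ℕ → ℝ) (x : ℕ → Fin k → ℝ) : mphPbar lam γ β 0 y x = 0 := by
  simp [mphPbar]

theorem mphPbar_succ_update (t : ℕ) (y : ℕ → ℝ) (x : ℕ → Fin k → ℝ) (yt : ℝ) :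
    mphPbar lam γ β (t + 1) (update y (t + 1) yt) x
      = mphPbar lam γ β t y x + mphRho lam γ β yt (y t) (x (t + 1)) := by
  rw [mphPbar, Finset.sum_Icc_succ_top (by omega), update_self, Nat.add_sub_cancel,
    update_of_ne (by omega)]
  congr 1
  refine Finset.sum_congr rfl fun i hi => ?_
  rw [Finset.mem_Icc] at hi
  rw [update_of_ne (by omega), update_of_ne (by omega)]

theorem mphPbar_congr {t : ℕ} (y : ℕ → ℝ) {x x' : ℕ → Fin k → ℝ} (h : ∀ i ≤ t, x i = x' i) :
    mphPbar lam γ β t y x = mphPbar lam γ β t y x' :=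
  Finset.sum_congr rfl fun i hi => by rw [h i (Finset.mem_Icc.1 hi).2]

theorem setIntegral_mphDensity_mul_comp_mphRho (hmeas : Measurable lam)
    (hpos : ∀ y ∈ Ioi (0:ℝ), 0 < lam y)
    (hint : ∀ y : ℝ, 0 < y → IntegrableOn lam (Ioc 0 y) volume)
    (htop : Filter.Tendsto (intHaz lam) Filter.atTop Filter.atTop) {G : ℝ → ℝ}
    (hG : Measurable G) (ylag : ℝ) (x : Fin k → ℝ) (a : ℝ) :
    ∫ y in Ioi (0:ℝ), mphDensity lam γ β y ylag x a * G (mphRho lam γ β y ylag x)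
      = ∫ ρ in Ioi (0:ℝ), exp a * exp (-(exp a * ρ)) * G ρ := by
  set e := exp (γ * ylag + ∑ i, x i * β i)
  have he : 0 < e := exp_pos _
  set K : ℝ → ℝ := fun ρ => exp a * exp (-(exp a * ρ)) * G ρ
  have hK : Measurable K := by fun_prop
  calc ∫ y in Ioi (0:ℝ), mphDensity lam γ β y ylag x a * G (mphRho lam γ β y ylag x)
      = ∫ y in Ioi (0:ℝ), lam y * (e * K (intHaz lam y * e)) := by
        congr 1
        funext y
        simp only [mphDensity, mphRho, K, e, exp_add]
        ring_nf
    _ = ∫ u in Ioi (0:ℝ), e * K (u * e) :=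
        setIntegral_mul_comp_intHaz hpos hint htop hmeas (F := fun u => e * K (u * e))
          (by fun_prop)
    _ = ∫ ρ in Ioi (0:ℝ), K ρ := by
        rw [integral_const_mul, integral_comp_mul_right_Ioi K 0 he, zero_mul, smul_eq_mul,
          ← mul_assoc, mul_inv_cancel₀ he.ne', one_mul]

theorem setIntegral_mphDensity_mul_comp_mphPbar_succ (hmeas : Measurable lam)
    (hpos : ∀ y ∈ Ioi (0:ℝ), 0 < lam y)
    (hint : ∀ y : ℝ, 0 < y → IntegrableOn lam (Ioc 0 y) volume)
    (htop : Filter.Tendsto (intHaz lam) Filter.atTop Filter.atTop) {F : ℝ → ℝ}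
    (hF : Measurable F) (t : ℕ) (y : ℕ → ℝ) (x : ℕ → Fin k → ℝ) (a : ℝ) :
    ∫ yt in Ioi (0:ℝ), mphDensity lam γ β yt (y t) (x (t + 1)) a *
        F (mphPbar lam γ β (t + 1) (update y (t + 1) yt) x)
      = expConv (exp a) F (mphPbar lam γ β t y x) := by
  simp_rw [mphPbar_succ_update]
  exact setIntegral_mphDensity_mul_comp_mphRho γ β hmeas hpos hint htop
    (G := fun ρ => F (mphPbar lam γ β t y x + ρ)) (hF.comp (measurable_const_add _)) _ _ a

theorem iterInt_mphDensity_comp_mphPbar (hmeas : Measurable lam)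
    (hpos : ∀ y ∈ Ioi (0:ℝ), 0 < lam y)
    (hint : ∀ y : ℝ, 0 < y → IntegrableOn lam (Ioc 0 y) volume)
    (htop : Filter.Tendsto (intHaz lam) Filter.atTop Filter.atTop) {G : ℝ → ℝ}
    (hG : Measurable G) (T : ℕ) (a : ℝ) (x : ℕ → Fin k → ℝ) (n : ℕ) :
    ∀ t, t + n = T → ∀ y, iterInt (volume.restrict (Ioi (0:ℝ)))
        (fun _ y' ylag x' a' => mphDensity lam γ β y' ylag x' a')
        (fun y' x' => G (mphPbar lam γ β T y' x')) a x n (t + 1) y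
      = (expConv (exp a))^[n] G (mphPbar lam γ β t y x) := by
  induction n with
  | zero =>
    rintro t rfl y
    rfl
  | succ n ih =>
    intro t ht y
    have hinner := fun yt => ih (t + 1) (by omega) (update y (t + 1) yt)
    simp only [iterInt, Nat.add_sub_cancel, hinner]
    rw [iterate_succ_apply', setIntegral_mphDensity_mul_comp_mphPbar_succ γ β hmeas hpos hint htop
      (measurable_iterate_expConv _ hG n)]

theorem pathInt_mphDensity_comp_mphPbar (hmeas : Measurable lam)
    (hpos : ∀ y ∈ Ioi (0:ℝ), 0 < lam y)
    (hint : ∀ y : ℝ, 0 < y → IntegrableOn lam (Ioc 0 y) volume)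
    (htop : Filter.Tendsto (intHaz lam) Filter.atTop Filter.atTop) {G : ℝ → ℝ}
    (hG : Measurable G) (T : ℕ) (a : ℝ) (g : ℕ → Kernel ((ℕ → ℝ) × (ℕ → Fin k → ℝ) × ℝ) (Fin k → ℝ))
    (hg : ∀ t, IsMarkovKernel (g t)) (n : ℕ) :
    ∀ t, t + (n + 1) = T → ∀ y x, pathInt (volume.restrict (Ioi (0:ℝ)))
        (fun _ y' ylag x' a' => mphDensity lam γ β y' ylag x' a') g
        (fun y' x' => G (mphPbar lam γ β T y' x')) a (n + 1) (t + 1) y x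
      = (expConv (exp a))^[n + 1] G (mphPbar lam γ β t y x) := by
  induction n with
  | zero =>
    rintro t rfl y x
    simp only [pathInt, Nat.add_sub_cancel]
    exact setIntegral_mphDensity_mul_comp_mphPbar_succ γ β hmeas hpos hint htop hG t y x a
  | succ n ih =>
    intro t ht y x
    have hinner : ∀ yt, ∫ xt, pathInt (volume.restrict (Ioi (0:ℝ)))
          (fun _ y' ylag x' a' => mphDensity lam γ β y' ylag x' a') g
          (fun y' x' => G (mphPbar lam γ β T y' x')) a (n + 1) (t + 1 + 1)
          (update y (t + 1) yt) (update x (t + 1 + 1) xt)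
          ∂(g (t + 1 + 1) (update y (t + 1) yt, x, a))
        = (expConv (exp a))^[n + 1] G (mphPbar lam γ β (t + 1) (update y (t + 1) yt) x) := by
      intro yt
      have := hg (t + 1 + 1)
      have hx : ∀ xt, mphPbar lam γ β (t + 1) (update y (t + 1) yt) (update x (t + 1 + 1) xt)
          = mphPbar lam γ β (t + 1) (update y (t + 1) yt) x :=
        fun xt => mphPbar_congr γ β _ fun i hi => update_of_ne (by omega) _ _
      simp [ih (t + 1) (by omega), hx]
    simp only [pathInt, Nat.add_sub_cancel, hinner]
    rw [iterate_succ_apply' _ (n + 1), setIntegral_mphDensity_mul_comp_mphPbar_succ γ β hmeas hpos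
      hint htop (measurable_iterate_expConv _ hG (n + 1))]

end Trajectory

theorem ash_FHR_moment_general
    (lam : ℝ → ℝ) (hlam_meas : Measurable lam)
    (hlam_pos : ∀ y ∈ Set.Ioi (0:ℝ), 0 < lam y)
    (hlam_int : ∀ y : ℝ, 0 < y → IntegrableOn lam (Set.Ioc 0 y) volume)
    (hlam_top : Filter.Tendsto (intHaz lam) Filter.atTop Filter.atTop)
    (γ : ℝ) (β : Fin k → ℝ) (T : ℕ) (hT : 2 ≤ T)
    -- the target evaluation point (ỹ, ỹ₋, x̃) ∈ (0,∞) × (0,∞) × ℝ^k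
    (ytil ytillag : ℝ) (xtil : Fin k → ℝ) :
    -- condition (i)
    (∀ (y : ℕ → ℝ) (x : ℕ → Fin k → ℝ) (a : ℝ),
      iterInt (volume.restrict (Set.Ioi (0:ℝ)))
        (fun _ y' ylag x' a' => mphDensity lam γ β y' ylag x' a')
        (fun y' x' =>
          lam ytil * Real.exp ((∑ i, xtil i * β i) + γ * ytillag) * ((T : ℝ) - 1) /
              mphPbar lam γ β T y' x' -
            lam ytil * Real.exp ((∑ i, xtil i * β i) + γ * ytillag) * Real.exp a)
        a x T 1 y = 0) ∧
    -- condition (ii)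
    (∀ s, 2 ≤ s → s ≤ T → ∀ (y : ℕ → ℝ) (x x' : ℕ → Fin k → ℝ) (a : ℝ),
      (∀ i, i < s → x i = x' i) →
      iterInt (volume.restrict (Set.Ioi (0:ℝ)))
        (fun _ y' ylag x'' a' => mphDensity lam γ β y' ylag x'' a')
        (fun y' x'' =>
          lam ytil * Real.exp ((∑ i, xtil i * β i) + γ * ytillag) * ((T : ℝ) - 1) /
              mphPbar lam γ β T y' x'' -
            lam ytil * Real.exp ((∑ i, xtil i * β i) + γ * ytillag) * Real.exp a)
        a x (T - s + 1) s y =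
      iterInt (volume.restrict (Set.Ioi (0:ℝ)))
        (fun _ y' ylag x'' a' => mphDensity lam γ β y' ylag x'' a')
        (fun y' x'' =>
          lam ytil * Real.exp ((∑ i, xtil i * β i) + γ * ytillag) * ((T : ℝ) - 1) /
              mphPbar lam γ β T y' x'' -
            lam ytil * Real.exp ((∑ i, xtil i * β i) + γ * ytillag) * Real.exp a)
        a x' (T - s + 1) s y) ∧
    -- consequence: E[φ(Y^T, X^T)] equals the average structural hazard
    (∀ (ν : Measure (ℝ × (Fin k → ℝ))), IsProbabilityMeasure ν →
      ∀ (piK : Kernel (ℝ × (Fin k → ℝ)) ℝ), IsMarkovKernel piK →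
      ∀ (g : ℕ → Kernel ((ℕ → ℝ) × (ℕ → Fin k → ℝ) × ℝ) (Fin k → ℝ)),
        (∀ t, IsMarkovKernel (g t)) →
      ∀ (y₀ : ℕ → ℝ) (x₀ : ℕ → Fin k → ℝ),
      -- φ is absolutely integrable under the induced joint law
      (∫⁻ p, ∫⁻ a, pathLint (volume.restrict (Set.Ioi (0:ℝ)))
          (fun _ y' ylag x' a' => mphDensity lam γ β y' ylag x' a') g
          (fun y' x' => ENNReal.ofReal
            |lam ytil * Real.exp ((∑ i, xtil i * β i) + γ * ytillag) * ((T : ℝ) - 1) /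
              mphPbar lam γ β T y' x'|) a T 1
          (Function.update y₀ 0 p.1) (Function.update x₀ 1 p.2) ∂(piK p) ∂ν) ≠ ⊤ →
      -- h = c e^A is absolutely integrable under the induced joint law
      (∫⁻ p, ∫⁻ a, ENNReal.ofReal
          |lam ytil * Real.exp ((∑ i, xtil i * β i) + γ * ytillag) * Real.exp a|
          ∂(piK p) ∂ν) ≠ ⊤ →
      (∫ p, ∫ a, pathInt (volume.restrict (Set.Ioi (0:ℝ)))
          (fun _ y' ylag x' a' => mphDensity lam γ β y' ylag x' a') g
          (fun y' x' =>
            lam ytil * Real.exp ((∑ i, xtil i * β i) + γ * ytillag) * ((T : ℝ) - 1) /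
              mphPbar lam γ β T y' x') a T 1
          (Function.update y₀ 0 p.1) (Function.update x₀ 1 p.2) ∂(piK p) ∂ν) =
        lam ytil * Real.exp ((∑ i, xtil i * β i) + γ * ytillag) *
          ∫ p, ∫ a, Real.exp a ∂(piK p) ∂ν) := by
  set c := lam ytil * exp ((∑ i, xtil i * β i) + γ * ytillag)
  have hT1 : (T : ℝ) - 1 ≠ 0 := by
    have : (2 : ℝ) ≤ T := by exact_mod_cast hT
    linarith
  have hG : ∀ d : ℝ, Measurable fun u : ℝ => c * ((T : ℝ) - 1) / u - d := by fun_prop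
  have hφ : ∀ a d,
      (expConv (exp a))^[T] (fun u => c * ((T : ℝ) - 1) / u - d) 0 = c * exp a - d := by
    intro a d
    rw [iterate_expConv_div_sub_zero (exp_pos a) _ _ hT]
    field_simp
  have hiter := fun a => iterInt_mphDensity_comp_mphPbar γ β hlam_meas hlam_pos hlam_int hlam_top
    (hG (c * exp a)) T a
  refine ⟨fun y x a => ?_, fun s hs2 hsT y x x' a hxx' => ?_,
    fun ν _ piK _ g hg y₀ x₀ _ _ => ?_⟩
  · rw [hiter a x T 0 (zero_add T) y, mphPbar_zero, hφ, sub_self]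
  · obtain ⟨r, rfl⟩ : ∃ r, s = r + 1 := ⟨s - 1, by omega⟩
    rw [hiter a x _ r (by omega) y, hiter a x' _ r (by omega) y,
      mphPbar_congr γ β y fun i hi => hxx' i (by omega)]
  · have hpath : ∀ (p : ℝ × (Fin k → ℝ)) (a : ℝ), pathInt (volume.restrict (Set.Ioi (0:ℝ)))
          (fun _ y' ylag x' a' => mphDensity lam γ β y' ylag x' a') g
          (fun y' x' => c * ((T : ℝ) - 1) / mphPbar lam γ β T y' x') a T 1
          (Function.update y₀ 0 p.1) (Function.update x₀ 1 p.2) = c * exp a := by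
      intro p a
      have h := pathInt_mphDensity_comp_mphPbar γ β hlam_meas hlam_pos hlam_int hlam_top (hG 0) T a
        g hg (T - 1) 0 (by omega) (update y₀ 0 p.1) (update x₀ 1 p.2)
      rw [Nat.sub_add_cancel (by omega), mphPbar_zero, hφ, sub_zero] at h
      simpa using h
    simp only [hpath, integral_const_mul]

/-- **FHR moment function for the average structural hazard.** In the MPH model with
`T ≥ 2` periods, fix a target evaluation point `(ỹ, ỹ₋, x̃)` and let
`c = λ_α(ỹ) e^{x̃'β + γ ỹ₋}`, `h(y^T, x^T, a) = c e^a`, and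
`φ(y^T, x^T) = c (T−1)/p̄`. Then (i) `∫ (φ − h) ∏_{t=1}^T f_θ dy^{1:T} = 0` for all
`(y_0, x^T, a)`; (ii) for each `s = 2,…,T` the partial integral
`∫ (φ − h) ∏_{t=s}^T f_θ dy^{s:T}` does not depend on `(x_s,…,x_T)`; and consequently,
under every feedback process and heterogeneity distribution making `φ` and `h`
integrable, `E[φ(Y^T, X^T)] = λ_α(ỹ) e^{x̃'β + γ ỹ₋} E[e^A]`. -/
theorem ash_FHR_moment
    (lam : ℝ → ℝ) (hlam_meas : Measurable lam)
    (hlam_pos : ∀ y ∈ Set.Ioi (0:ℝ), 0 < lam y)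
    (hlam_int : ∀ y : ℝ, 0 < y → IntegrableOn lam (Set.Ioc 0 y) volume)
    (hlam_top : Filter.Tendsto (intHaz lam) Filter.atTop Filter.atTop)
    (γ : ℝ) (β : Fin k → ℝ) (T : ℕ) (hT : 2 ≤ T)
    -- the target evaluation point (ỹ, ỹ₋, x̃) ∈ (0,∞) × (0,∞) × ℝ^k
    (ytil ytillag : ℝ) (hytil : 0 < ytil) (hytillag : 0 < ytillag) (xtil : Fin k → ℝ) :
    -- condition (i)
    (∀ (y : ℕ → ℝ) (x : ℕ → Fin k → ℝ) (a : ℝ),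
      iterInt (volume.restrict (Set.Ioi (0:ℝ)))
        (fun _ y' ylag x' a' => mphDensity lam γ β y' ylag x' a')
        (fun y' x' =>
          lam ytil * Real.exp ((∑ i, xtil i * β i) + γ * ytillag) * ((T : ℝ) - 1) /
              mphPbar lam γ β T y' x' -
            lam ytil * Real.exp ((∑ i, xtil i * β i) + γ * ytillag) * Real.exp a)
        a x T 1 y = 0) ∧
    -- condition (ii)
    (∀ s, 2 ≤ s → s ≤ T → ∀ (y : ℕ → ℝ) (x x' : ℕ → Fin k → ℝ) (a : ℝ),
      (∀ i, i < s → x i = x' i) →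
      iterInt (volume.restrict (Set.Ioi (0:ℝ)))
        (fun _ y' ylag x'' a' => mphDensity lam γ β y' ylag x'' a')
        (fun y' x'' =>
          lam ytil * Real.exp ((∑ i, xtil i * β i) + γ * ytillag) * ((T : ℝ) - 1) /
              mphPbar lam γ β T y' x'' -
            lam ytil * Real.exp ((∑ i, xtil i * β i) + γ * ytillag) * Real.exp a)
        a x (T - s + 1) s y =
      iterInt (volume.restrict (Set.Ioi (0:ℝ)))
        (fun _ y' ylag x'' a' => mphDensity lam γ β y' ylag x'' a')
        (fun y' x'' =>
          lam ytil * Real.exp ((∑ i, xtil i * β i) + γ * ytillag) * ((T : ℝ) - 1) /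
              mphPbar lam γ β T y' x'' -
            lam ytil * Real.exp ((∑ i, xtil i * β i) + γ * ytillag) * Real.exp a)
        a x' (T - s + 1) s y) ∧
    -- consequence: E[φ(Y^T, X^T)] equals the average structural hazard
    (∀ (ν : Measure (ℝ × (Fin k → ℝ))), IsProbabilityMeasure ν →
      ∀ (piK : Kernel (ℝ × (Fin k → ℝ)) ℝ), IsMarkovKernel piK →
      ∀ (g : ℕ → Kernel ((ℕ → ℝ) × (ℕ → Fin k → ℝ) × ℝ) (Fin k → ℝ)),
        (∀ t, IsMarkovKernel (g t)) →
      ∀ (y₀ : ℕ → ℝ) (x₀ : ℕ → Fin k → ℝ),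
      -- φ is absolutely integrable under the induced joint law
      (∫⁻ p, ∫⁻ a, pathLint (volume.restrict (Set.Ioi (0:ℝ)))
          (fun _ y' ylag x' a' => mphDensity lam γ β y' ylag x' a') g
          (fun y' x' => ENNReal.ofReal
            |lam ytil * Real.exp ((∑ i, xtil i * β i) + γ * ytillag) * ((T : ℝ) - 1) /
              mphPbar lam γ β T y' x'|) a T 1
          (Function.update y₀ 0 p.1) (Function.update x₀ 1 p.2) ∂(piK p) ∂ν) ≠ ⊤ →
      -- h = c e^A is absolutely integrable under the induced joint law
      (∫⁻ p, ∫⁻ a, ENNReal.ofReal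
          |lam ytil * Real.exp ((∑ i, xtil i * β i) + γ * ytillag) * Real.exp a|
          ∂(piK p) ∂ν) ≠ ⊤ →
      (∫ p, ∫ a, pathInt (volume.restrict (Set.Ioi (0:ℝ)))
          (fun _ y' ylag x' a' => mphDensity lam γ β y' ylag x' a') g
          (fun y' x' =>
            lam ytil * Real.exp ((∑ i, xtil i * β i) + γ * ytillag) * ((T : ℝ) - 1) /
              mphPbar lam γ β T y' x') a T 1
          (Function.update y₀ 0 p.1) (Function.update x₀ 1 p.2) ∂(piK p) ∂ν) =
        lam ytil * Real.exp ((∑ i, xtil i * β i) + γ * ytillag) *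
          ∫ p, ∫ a, Real.exp a ∂(piK p) ∂ν) :=
  ash_FHR_moment_general lam hlam_meas hlam_pos hlam_int hlam_top γ β T hT ytil ytillag xtil

end MPH

end
end

section
/- New second-order FHR moment function for the Poisson model (equation 3.19). In the Poisson panel data model with T = 2, for any function m : ℕ × ℝ^k → ℝ the function φ(y_0, y_1, y_2, x_1, x_2) = (y_1(y_1 − 1) − y_2(y_2 − 1) · e^{2(z_1 − z_2)'θ}) · m(y_0, x_1) satisfies the FHR conditions with μ the counting measure on ℕ: (ii) for all (y_0, y_1, x_1, x_2, a), Σ_{y_2 ∈ ℕ} φ(y_0, y_1, y_2, x_1, x_2) f_θ(y_2 | y_1, x_2, a) = (y_1(y_1 − 1) − e^{2(z_1'θ + a)}) m(y_0, x_1), which does not depend on x_2; and (i) for all (y_0, x_1, x_2, a), Σ_{y_1 ∈ ℕ} Σ_{y_2 ∈ ℕ} φ(y_0, y_1, y_2, x_1, x_2) f_θ(y_2 | y_1, x_2, a) f_θ(y_1 | y_0, x_1, a) = 0. -/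
/-!
The new second-order FHR moment function for the Poisson panel data model with
feedback (T = 2) of Bonhomme, Dano & Graham, equation (3.19):
`φ(y_0, y_1, y_2, x_1, x_2) = (y_1(y_1−1) − y_2(y_2−1) e^{2(z_1 − z_2)'θ}) m(y_0, x_1)`
satisfies the FHR conditions (ii) and (i), with μ the counting measure on ℕ.
-/

open scoped BigOperators

noncomputable section

variable {k : ℕ}

/-- The linear index `z_t'θ = x_t'θ_x + y_{t−1} θ_y` of the Poisson model, where
`z_t = (x_t', y_{t−1})'` and `θ = (θ_x', θ_y)'`. -/
noncomputable def poisLin (θx : Fin k → ℝ) (θy : ℝ) (x : Fin k → ℝ) (ylag : ℕ) : ℝ :=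
  (∑ i, x i * θx i) + (ylag : ℝ) * θy

/-- The Poisson conditional probability mass function with mean `e^{z'θ + a}`:
`f_θ(y | y₋, x, a) = exp(−e^{z'θ + a}) e^{y (z'θ + a)} / y!`. -/
noncomputable def poisPMF (lin a : ℝ) (y : ℕ) : ℝ :=
  Real.exp (-Real.exp (lin + a)) * Real.exp ((y : ℝ) * (lin + a)) / (Nat.factorial y)

/-!
Under a Poisson law with mean `λ`, the total mass is `1` and the second factorial moment
`E[Y(Y − 1)]` is `λ²` (shift the exponential series by two). In (ii) the mean is
`λ₂ = e^{z₂'θ + a}`, and the weight `e^{2(z₁ − z₂)'θ}` turns `λ₂²` into `λ₁² = e^{2(z₁'θ + a)}`,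
so `x₂` drops out. Then (i) is the mean of `y₁(y₁ − 1) − λ₁²` under the Poisson
law with mean `λ₁`, which vanishes.
-/

open Real Nat

theorem Real.hasSum_pow_div_factorial (x : ℝ) : HasSum (fun n : ℕ => x ^ n / n !) (exp x) := by
  rw [exp_eq_exp_ℝ]
  exact NormedSpace.expSeries_div_hasSum_exp x

theorem Real.hasSum_mul_sub_one_mul_pow_div_factorial (x : ℝ) :
    HasSum (fun n : ℕ => (n : ℝ) * (n - 1) * (x ^ n / n !)) (x ^ 2 * exp x) := by
  rw [← hasSum_nat_add_iff' 2]
  have shift (n : ℕ) : ((n + 2 : ℕ) : ℝ) * ((n + 2 : ℕ) - 1) * (x ^ (n + 2) / (n + 2) !) =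
      x ^ 2 * (x ^ n / n !) := by
    rw [factorial_succ, factorial_succ]
    push_cast
    field_simp
    ring
  simpa [Finset.sum_range_succ] using
    ((hasSum_pow_div_factorial x).mul_left (x ^ 2)).congr_fun shift

theorem poisPMF_eq (lin a : ℝ) (y : ℕ) :
    poisPMF lin a y = exp (-exp (lin + a)) * (exp (lin + a) ^ y / y !) := by
  rw [poisPMF, ← exp_nat_mul]
  ring

theorem hasSum_poisPMF (lin a : ℝ) : HasSum (poisPMF lin a) 1 := by
  have h := (hasSum_pow_div_factorial (exp (lin + a))).mul_left (exp (-exp (lin + a)))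
  rw [← exp_add, neg_add_cancel, exp_zero] at h
  exact h.congr_fun (poisPMF_eq lin a)

theorem hasSum_mul_sub_one_mul_poisPMF (lin a : ℝ) :
    HasSum (fun y : ℕ => (y : ℝ) * (y - 1) * poisPMF lin a y) (exp (2 * (lin + a))) := by
  have h := (hasSum_mul_sub_one_mul_pow_div_factorial (exp (lin + a))).mul_left
    (exp (-exp (lin + a)))
  have hval :
      exp (2 * (lin + a)) = exp (-exp (lin + a)) * (exp (lin + a) ^ 2 * exp (exp (lin + a))) := by
    rw [mul_left_comm, ← exp_add, neg_add_cancel, exp_zero, mul_one, ← exp_nat_mul]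
    push_cast
    rfl
  rw [hval]
  exact h.congr_fun fun y => by rw [poisPMF_eq]; ring

theorem hasSum_fhr_condition_ii (lin₁ lin₂ a c : ℝ) (y₁ : ℕ) :
    HasSum (fun y₂ : ℕ => ((y₁ : ℝ) * (y₁ - 1) - (y₂ : ℝ) * (y₂ - 1) *
        exp (2 * (lin₁ - lin₂))) * c * poisPMF lin₂ a y₂)
      (((y₁ : ℝ) * (y₁ - 1) - exp (2 * (lin₁ + a))) * c) := by
  have h := ((hasSum_poisPMF lin₂ a).mul_left ((y₁ : ℝ) * (y₁ - 1) * c)).sub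
    ((hasSum_mul_sub_one_mul_poisPMF lin₂ a).mul_left (exp (2 * (lin₁ - lin₂)) * c))
  have hval : ((y₁ : ℝ) * (y₁ - 1) - exp (2 * (lin₁ + a))) * c =
      (y₁ : ℝ) * (y₁ - 1) * c * 1 - exp (2 * (lin₁ - lin₂)) * c * exp (2 * (lin₂ + a)) := by
    rw [show 2 * (lin₁ + a) = 2 * (lin₁ - lin₂) + 2 * (lin₂ + a) by ring, exp_add]
    ring
  rw [hval]
  exact h.congr_fun fun y₂ => by ring

theorem hasSum_mul_sub_one_sub_exp_mul_poisPMF (lin a c : ℝ) :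
    HasSum (fun y₁ : ℕ => ((y₁ : ℝ) * (y₁ - 1) - exp (2 * (lin + a))) * c * poisPMF lin a y₁)
      0 := by
  have h := ((hasSum_mul_sub_one_mul_poisPMF lin a).mul_right c).sub
    ((hasSum_poisPMF lin a).mul_left (exp (2 * (lin + a)) * c))
  rw [show (0 : ℝ) = exp (2 * (lin + a)) * c - exp (2 * (lin + a)) * c * 1 by ring]
  exact h.congr_fun fun y₁ => by ring

/-- **New second-order FHR moment function for the Poisson model (equation 3.19).**
For `φ = (y_1(y_1 − 1) − y_2(y_2 − 1) e^{2(z_1 − z_2)'θ}) m(y_0, x_1)`: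
(ii) summing `φ f_θ(y_2 | y_1, x_2, a)` over `y_2 ∈ ℕ` gives
`(y_1(y_1 − 1) − e^{2(z_1'θ + a)}) m(y_0, x_1)`, which does not depend on `x_2`; and
(i) the double sum of `φ f_θ(y_2|y_1,x_2,a) f_θ(y_1|y_0,x_1,a)` over `(y_1, y_2)`
is zero. -/
theorem poisson_second_order_FHR
    (θx : Fin k → ℝ) (θy : ℝ) (m : ℕ → (Fin k → ℝ) → ℝ) :
    -- condition (ii)
    (∀ (y0 y1 : ℕ) (x1 x2 : Fin k → ℝ) (a : ℝ),
      (∑' y2 : ℕ,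
          ((y1 : ℝ) * ((y1 : ℝ) - 1) - (y2 : ℝ) * ((y2 : ℝ) - 1) *
              Real.exp (2 * (poisLin θx θy x1 y0 - poisLin θx θy x2 y1))) * m y0 x1 *
            poisPMF (poisLin θx θy x2 y1) a y2) =
        ((y1 : ℝ) * ((y1 : ℝ) - 1) -
            Real.exp (2 * (poisLin θx θy x1 y0 + a))) * m y0 x1) ∧
    -- condition (i)
    (∀ (y0 : ℕ) (x1 x2 : Fin k → ℝ) (a : ℝ),
      (∑' y1 : ℕ,
          (∑' y2 : ℕ,
            ((y1 : ℝ) * ((y1 : ℝ) - 1) - (y2 : ℝ) * ((y2 : ℝ) - 1) *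
                Real.exp (2 * (poisLin θx θy x1 y0 - poisLin θx θy x2 y1))) * m y0 x1 *
              poisPMF (poisLin θx θy x2 y1) a y2) *
            poisPMF (poisLin θx θy x1 y0) a y1) = 0) := by
  refine ⟨fun y0 y1 x1 x2 a => (hasSum_fhr_condition_ii _ _ a _ y1).tsum_eq, fun y0 x1 x2 a => ?_⟩
  simp only [fun y1 => (hasSum_fhr_condition_ii (poisLin θx θy x1 y0) (poisLin θx θy x2 y1) a
    (m y0 x1) y1).tsum_eq]
  exact (hasSum_mul_sub_one_sub_exp_mul_poisPMF _ a _).tsum_eq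

end
end
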